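/- arXiv:1802.03786 — 2 statements merged into one kernel-verified Lean document; each statement's English description precedes it below -/
import Mathlib

section
/- Let R be a ring with identity and let A_1, …, A_n be proper right ideals of R such that A_iA_j = A_jA_i for every i, j = 1, …, n and the family {A_1, …, A_n} is coindependent. Then the product A_1⋯A_n equals the intersection ⋂_{i=1}^n A_i. -/
open MulOpposite

universe u

/-- The product `A·B` of two right ideals of `R` (right ideals are `Rᵐᵒᵖ`-submodules of `R`):
the set of all finite sums of products `a * b` with `a ∈ A`, `b ∈ B`. -/
def rmul {R : Type u} [Ring R] (A B : Submodule Rᵐᵒᵖ R) : Submodule Rᵐᵒᵖ R :=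
  Submodule.span Rᵐᵒᵖ {x : R | ∃ a ∈ A, ∃ b ∈ B, x = a * b}

/-- The product `A₁⋯Aₙ` of a (possibly empty) list of right ideals. -/
def rprod {R : Type u} [Ring R] : List (Submodule Rᵐᵒᵖ R) → Submodule Rᵐᵒᵖ R
  | [] => ⊤
  | [A] => A
  | A :: l => rmul A (rprod l)

/-- A finite family of right ideals is coindependent if `Aᵢ + ⋂_{j ≠ i} Aⱼ = R` for every `i`. -/
def Coindep {R : Type u} [Ring R] {n : ℕ} (A : Fin n → Submodule Rᵐᵒᵖ R) : Prop :=
  ∀ i, A i ⊔ (⨅ j, ⨅ (_ : j ≠ i), A j) = ⊤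

/-- A module is uniserial if its submodules are linearly ordered by inclusion. -/
def IsUniserialMod (S : Type*) [Ring S] (M : Type*) [AddCommGroup M] [Module S M] : Prop :=
  ∀ N P : Submodule S M, N ≤ P ∨ P ≤ N

/-- A right ideal is a two-sided ideal if it is also closed under left multiplication. -/
def IsTwoSidedRid {R : Type u} [Ring R] (A : Submodule Rᵐᵒᵖ R) : Prop :=
  ∀ (r : R), ∀ x ∈ A, r * x ∈ A

/-- A serial factorization of a right ideal `A`: a factorization `A = A₁⋯Aₙ` into proper
right ideals that pairwise commute, form a coindependent family, and are such that every
quotient `R/Aᵢ` is a uniserial right `R`-module. -/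
def IsSerialFact {R : Type u} [Ring R] {n : ℕ} (A : Submodule Rᵐᵒᵖ R)
    (F : Fin n → Submodule Rᵐᵒᵖ R) : Prop :=
  (∀ i, F i ≠ ⊤) ∧ (∀ i j, rmul (F i) (F j) = rmul (F j) (F i)) ∧ Coindep F ∧
    (∀ i, IsUniserialMod Rᵐᵒᵖ (R ⧸ F i)) ∧ A = rprod (List.ofFn F)

/-- A right ideal has a serial factorization if it admits one of some length. -/
def HasSerialFact {R : Type u} [Ring R] (A : Submodule Rᵐᵒᵖ R) : Prop :=
  ∃ (n : ℕ) (F : Fin n → Submodule Rᵐᵒᵖ R), IsSerialFact A F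

/-- A right chain ring: its right ideals are linearly ordered by inclusion. -/
def IsRightChainRing (R : Type u) [Ring R] : Prop :=
  ∀ A B : Submodule Rᵐᵒᵖ R, A ≤ B ∨ B ≤ A

/-- A ring is right duo if every right ideal is a two-sided ideal. -/
def IsRightDuo (R : Type u) [Ring R] : Prop :=
  ∀ A : Submodule Rᵐᵒᵖ R, IsTwoSidedRid A

/-- The principal right ideal `rR`. -/
def rspan {R : Type u} [Ring R] (r : R) : Submodule Rᵐᵒᵖ R :=
  Submodule.span Rᵐᵒᵖ ({r} : Set R)

/-!
Induct on `n`. Splitting off `A₀`, the induction hypothesis turns `A₁⋯Aₙ` into `B = ⋂_{i ≥ 1} Aᵢ`,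
coindependence gives `A₀ + B = R`, and `A₀` commutes with `B` because it commutes with each factor.
For right ideals with `A + B = R` and `AB = BA`, writing `1 = a + b` splits any `x ∈ A ∩ B` as
`x = x a + x b ∈ BA + AB = AB`.
-/

open Pointwise

section RightIdealProduct

variable {R : Type u} [Ring R]

theorem mem_rmul_iff {A B : Submodule Rᵐᵒᵖ R} {x : R} :
    x ∈ rmul A B ↔ x ∈ A.toAddSubmonoid * B.toAddSubmonoid := by
  constructor
  · intro hx
    induction hx using Submodule.span_induction with
    | mem y hy =>
      obtain ⟨a, ha, b, hb, rfl⟩ := hy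
      exact AddSubmonoid.mul_mem_mul ha hb
    | zero => exact zero_mem _
    | add y z _ _ hy hz => exact add_mem hy hz
    | smul r y _ hy =>
      refine AddSubmonoid.mul_induction_on hy (fun a ha b hb => ?_)
        fun y z hy hz => smul_add r y z ▸ add_mem hy hz
      rw [smul_eq_mul_unop, mul_assoc]
      exact AddSubmonoid.mul_mem_mul ha (B.smul_mem r hb)
  · intro hx
    exact AddSubmonoid.mul_induction_on hx
      (fun a ha b hb => Submodule.subset_span ⟨a, ha, b, hb, rfl⟩) fun _ _ => add_mem

theorem toAddSubmonoid_rmul (A B : Submodule Rᵐᵒᵖ R) :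
    (rmul A B).toAddSubmonoid = A.toAddSubmonoid * B.toAddSubmonoid :=
  AddSubmonoid.ext fun _ => mem_rmul_iff

theorem rmul_assoc (A B C : Submodule Rᵐᵒᵖ R) : rmul (rmul A B) C = rmul A (rmul B C) :=
  Submodule.toAddSubmonoid_injective <| by simp only [toAddSubmonoid_rmul, mul_assoc]

theorem rmul_le_left (A B : Submodule Rᵐᵒᵖ R) : rmul A B ≤ A := by
  rw [rmul, Submodule.span_le]
  rintro x ⟨a, ha, b, hb, rfl⟩
  exact A.smul_mem (op b) ha

theorem rmul_top (A : Submodule Rᵐᵒᵖ R) : rmul A ⊤ = A :=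
  le_antisymm (rmul_le_left A ⊤) fun a ha =>
    Submodule.subset_span ⟨a, ha, 1, trivial, (mul_one a).symm⟩

theorem rprod_cons (A : Submodule Rᵐᵒᵖ R) (l : List (Submodule Rᵐᵒᵖ R)) :
    rprod (A :: l) = rmul A (rprod l) := by
  cases l with
  | nil => exact (rmul_top A).symm
  | cons B l => rfl

theorem rmul_rprod_comm (A : Submodule Rᵐᵒᵖ R) {l : List (Submodule Rᵐᵒᵖ R)} (hl : l ≠ [])
    (h : ∀ B ∈ l, rmul A B = rmul B A) : rmul A (rprod l) = rmul (rprod l) A := by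
  induction l with
  | nil => exact absurd rfl hl
  | cons B l ih =>
    rcases eq_or_ne l [] with rfl | hl'
    · exact h B List.mem_cons_self
    · rw [rprod_cons, ← rmul_assoc, h B List.mem_cons_self, rmul_assoc,
        ih hl' fun C hC => h C (List.mem_cons_of_mem B hC), ← rmul_assoc]

theorem rmul_eq_inf_of_sup_eq_top {A B : Submodule Rᵐᵒᵖ R} (hsup : A ⊔ B = ⊤)
    (hcomm : rmul A B = rmul B A) : rmul A B = A ⊓ B := by
  refine le_antisymm (le_inf (rmul_le_left A B) (hcomm ▸ rmul_le_left B A)) ?_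
  rintro x ⟨hxA, hxB⟩
  obtain ⟨a, ha, b, hb, hab⟩ := Submodule.mem_sup.mp (hsup ▸ Submodule.mem_top : (1 : R) ∈ A ⊔ B)
  have hx : x = x * a + x * b := by rw [← mul_add, hab, mul_one]
  rw [hx]
  exact add_mem (hcomm ▸ Submodule.subset_span ⟨x, hxB, a, ha, rfl⟩)
    (Submodule.subset_span ⟨x, hxA, b, hb, rfl⟩)

end RightIdealProduct

section Coindep

variable {R : Type u} [Ring R] {n : ℕ} {A : Fin (n + 1) → Submodule Rᵐᵒᵖ R}

theorem Coindep.tail (h : Coindep A) : Coindep fun i : Fin n => A i.succ := by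
  intro i
  rw [eq_top_iff, ← h i.succ]
  refine sup_le_sup_left (le_iInf₂ fun j hj => ?_) _
  exact iInf₂_le (f := fun j (_ : j ≠ i.succ) => A j) j.succ ((Fin.succ_injective n).ne hj)

theorem Coindep.sup_iInf_succ_eq_top (h : Coindep A) : A 0 ⊔ ⨅ i : Fin n, A i.succ = ⊤ := by
  rw [eq_top_iff, ← h 0]
  refine sup_le_sup_left (le_iInf fun j => ?_) _
  exact iInf₂_le (f := fun j (_ : j ≠ 0) => A j) j.succ j.succ_ne_zero

end Coindep

theorem iInf_fin_succ {α : Type*} [CompleteLattice α] {n : ℕ} (f : Fin (n + 1) → α) :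
    ⨅ i, f i = f 0 ⊓ ⨅ i : Fin n, f i.succ := by
  rw [← (finSuccEquiv n).symm.iInf_comp, iInf_option]
  rfl

theorem statement0_general {R : Type u} [Ring R] {n : ℕ}
    (A : Fin n → Submodule Rᵐᵒᵖ R)
    (hcomm : ∀ i j, rmul (A i) (A j) = rmul (A j) (A i))
    (hcoind : Coindep A) :
    rprod (List.ofFn A) = ⨅ i, A i := by
  induction n with
  | zero => exact (iInf_of_empty A).symm
  | succ n ih =>
    have htail : rprod (List.ofFn fun i : Fin n => A i.succ) = ⨅ i : Fin n, A i.succ :=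
      ih _ (fun i j => hcomm i.succ j.succ) hcoind.tail
    rw [List.ofFn_succ, rprod_cons, htail, iInf_fin_succ]
    rcases n.eq_zero_or_pos with rfl | hn
    · rw [iInf_of_empty, rmul_top, inf_top_eq]
    · refine rmul_eq_inf_of_sup_eq_top hcoind.sup_iInf_succ_eq_top ?_
      rw [← htail]
      refine rmul_rprod_comm _ (by simp [hn.ne']) fun B hB => ?_
      obtain ⟨j, rfl⟩ := List.mem_ofFn.mp hB
      exact hcomm 0 j.succ

/-- Lemma 1(1): if proper right ideals `A₁, …, Aₙ` pairwise commute and form a coindependent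
family, then `A₁⋯Aₙ = ⋂ᵢ Aᵢ`. -/
theorem statement0 {R : Type u} [Ring R] [Nontrivial R] {n : ℕ}
    (A : Fin n → Submodule Rᵐᵒᵖ R)
    (hproper : ∀ i, A i ≠ ⊤)
    (hcomm : ∀ i j, rmul (A i) (A j) = rmul (A j) (A i))
    (hcoind : Coindep A) :
    rprod (List.ofFn A) = ⨅ i, A i :=
  statement0_general A hcomm hcoind
end

section
/- Let R be a right chain ring and B a right ideal of R such that R/B is isomorphic to R as a right R-module. Then B = 0. -/
open MulOpposite

universe u

/-- Step 1 in Theorem 3.3: in a right chain ring, a right ideal `B` with `R/B ≅ R` as right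
`R`-modules is the zero ideal. -/
theorem statement11 {R : Type u} [Ring R] [Nontrivial R]
    (hchain : IsRightChainRing R) (B : Submodule Rᵐᵒᵖ R)
    (h : Nonempty ((R ⧸ B) ≃ₗ[Rᵐᵒᵖ] R)) :
    B = ⊥ := by
  obtain ⟨φ⟩ := h
  set f : R →ₗ[Rᵐᵒᵖ] R := φ.toLinearMap.comp B.mkQ with hf
  set a : R := f 1 with ha
  have hfx : ∀ x : R, f x = a * x := by
    intro x
    have : f ((op x) • (1 : R)) = (op x) • f 1 := map_smul f (op x) 1
    simpa [op_smul_eq_mul] using this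
  -- kernel of f is B
  have hker : ∀ x : R, x ∈ B ↔ a * x = 0 := by
    intro x
    rw [← hfx]
    constructor
    · intro hx
      simp [hf, (Submodule.Quotient.mk_eq_zero B).2 hx]
    · intro hx
      have : φ (B.mkQ x) = 0 := hx
      have : B.mkQ x = 0 := by
        apply φ.injective
        simpa using this
      exact (Submodule.Quotient.mk_eq_zero B).1 this
  -- surjectivity gives right inverse
  obtain ⟨b, hb⟩ : ∃ b, a * b = 1 := by
    obtain ⟨b, hb⟩ := φ.surjective 1
    obtain ⟨b', rfl⟩ := B.mkQ_surjective b
    exact ⟨b', by rw [← hfx]; exact hb⟩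
  set e : R := b * a with he
  have hee : e * e = e := by
    rw [he]; rw [mul_assoc, ← mul_assoc a b a, hb, one_mul]
  have heb : e * b = b := by rw [he, mul_assoc, hb, mul_one]
  -- chain condition forces e = 1
  have he1 : e = 1 := by
    rcases hchain (Submodule.span Rᵐᵒᵖ {e}) (Submodule.span Rᵐᵒᵖ {1 - e}) with hle | hle
    · -- e ∈ span {1-e}: e = (1-e)*r, so e = e*e = e*(1-e)*r = 0, contradiction
      have : e ∈ Submodule.span Rᵐᵒᵖ ({1 - e} : Set R) :=
        hle (Submodule.mem_span_singleton_self e)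
      obtain ⟨r, hr⟩ := Submodule.mem_span_singleton.1 this
      have hr' : (1 - e) * r.unop = e := by simpa [op_smul_eq_mul] using hr
      have he0 : e = 0 := by
        calc e = e * e := hee.symm
        _ = e * ((1 - e) * r.unop) := by rw [hr']
        _ = (e * (1 - e)) * r.unop := by simp only [he, mul_assoc]
        _ = 0 := by rw [mul_sub, mul_one, hee, sub_self, zero_mul]
      exfalso
      have : (1 : R) = 0 := by
        rw [← hb, ← heb, he0, zero_mul, mul_zero]
      exact one_ne_zero this
    · have : (1 - e) ∈ Submodule.span Rᵐᵒᵖ ({e} : Set R) :=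
        hle (Submodule.mem_span_singleton_self (1 - e))
      obtain ⟨r, hr⟩ := Submodule.mem_span_singleton.1 this
      have hr' : e * r.unop = 1 - e := by simpa [op_smul_eq_mul] using hr
      have : (1 - e) = 0 := by
        calc (1 - e) = (1 - e) * (1 - e) := by
              rw [mul_sub, mul_one, sub_mul, one_mul, hee]; abel
        _ = (1 - e) * (e * r.unop) := by rw [hr']
        _ = ((1 - e) * e) * r.unop := by simp only [he, mul_assoc]
        _ = 0 := by rw [sub_mul, one_mul, hee, sub_self, zero_mul]
      have := sub_eq_zero.1 this; exact this.symm
  -- now a is left-cancellable: a*x = 0 → x = 0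
  ext x
  simp only [Submodule.mem_bot, hker]
  constructor
  · intro hx
    have : b * (a * x) = 0 := by rw [hx, mul_zero]
    rwa [← mul_assoc, ← he, he1, one_mul] at this
  · intro hx
    rw [hx, mul_zero]
end
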